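/- Let w ∈ F be represented by the reduced tree pair diagram (T_-, T_+), have unique normal form x_{i_1}^{r_1} ⋯ x_{i_n}^{r_n} x_{j_m}^{-s_m} ⋯ x_{j_1}^{-s_1}, and suppose the left subtree of the right child of the root of T_- is nonempty. Then w x_1 has normal form x_{i_1}^{r_1} ⋯ x_{i_n}^{r_n} x_{j_m}^{-s_m} ⋯ x_{j_l}^{-(s_l - 1)} ⋯ x_{j_1}^{-s_1}, where the index j_l is the smallest leaf number occurring in the right subtree of the root of T_-. -/

import Mathlib

/-!
Combinatorial properties of Thompson's group F (Cleary–Taback).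

Common definitions: finite rooted binary trees, leaf exponents, reduced tree
pair diagrams, Fordham's caret types and weights, Thompson's group `F` as the
presented group on `x₀, x₁`, the infinite family of generators `x n`, word
length with respect to `{x₀, x₁}`, and the element of `F` represented by a
tree pair diagram.
-/

noncomputable section

namespace Thompson

/-- Finite rooted binary trees; a `node` is a caret. -/
inductive BinTree : Type
  | leaf : BinTree
  | node : BinTree → BinTree → BinTree
  deriving DecidableEq

namespace BinTree

/-- Number of carets (internal nodes). -/
def numCarets : BinTree → ℕ
  | .leaf => 0
  | .node l r => numCarets l + numCarets r + 1

/-- Number of exposed leaves. -/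
def numLeaves : BinTree → ℕ
  | .leaf => 1
  | .node l r => numLeaves l + numLeaves r

/-- The left subtree of the root (a leaf if the tree is a leaf). -/
def leftSubtree : BinTree → BinTree
  | .leaf => .leaf
  | .node l _ => l

/-- The right subtree of the root (a leaf if the tree is a leaf). -/
def rightSubtree : BinTree → BinTree
  | .leaf => .leaf
  | .node _ r => r

/-- Helper for `exps`: leaf exponents of a subtree hanging by a left edge,
where maximal left-edge paths may also use the edge from this subtree's root
to its parent. -/
def expsAux : BinTree → List ℕ
  | .leaf => [0]
  | .node l r =>
      (match expsAux l with
        | [] => []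
        | a :: as => (a + 1) :: as) ++ expsAux r

/-- The list of leaf exponents `E(0), …, E(m)`: `E(k)` is the length of the
maximal path of left edges from leaf `k` that does not reach the right side
of the tree. -/
def exps : BinTree → List ℕ
  | .leaf => [0]
  | .node l r => expsAux l ++ exps r

/-- The indices `m` such that the exposed leaves numbered `m` and `m+1` are
the two leaves of a single caret. -/
def exposedCaretPairs : BinTree → List ℕ
  | .leaf => []
  | .node .leaf .leaf => [0]
  | .node l r => exposedCaretPairs l ++ (exposedCaretPairs r).map (· + numLeaves l)

/-- The smallest leaf number occurring in the right subtree of the root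
(leaves are numbered from `0` left to right, so this is the number of leaves
of the left subtree of the root). -/
def minRightLeaf (T : BinTree) : ℕ := T.leftSubtree.numLeaves

/-- A tree all of whose non-root carets are right carets. -/
def IsRightVine : BinTree → Prop
  | .leaf => True
  | .node l r => l = .leaf ∧ IsRightVine r

end BinTree

open BinTree

/-- `(T₋, T₊)` is a reduced tree pair diagram: the two trees have the same
number of carets and there is no index `m` such that in both trees the
exposed leaves numbered `m` and `m+1` are the two leaves of a single caret. -/
def IsReducedPair (Tm Tp : BinTree) : Prop :=
  Tm.numCarets = Tp.numCarets ∧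
    ∀ m : ℕ, ¬(m ∈ exposedCaretPairs Tm ∧ m ∈ exposedCaretPairs Tp)

/-- Position of a caret: on the left side of the tree (the root counts as a
left caret), on the right side, or interior. -/
inductive CaretPos : Type
  | left | right | interior
  deriving DecidableEq

/-- Infix-ordered list of `(position, has right child)` for the carets of a
subtree all of whose carets are interior. -/
def interiorInfo : BinTree → List (CaretPos × Bool)
  | .leaf => []
  | .node l r =>
      interiorInfo l ++ (CaretPos.interior, decide (r ≠ BinTree.leaf)) :: interiorInfo r

/-- Infix information for a subtree hanging on the left side of the tree. -/
def leftInfo : BinTree → List (CaretPos × Bool)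
  | .leaf => []
  | .node l r =>
      leftInfo l ++ (CaretPos.left, decide (r ≠ BinTree.leaf)) :: interiorInfo r

/-- Infix information for a subtree hanging on the right side of the tree. -/
def rightInfo : BinTree → List (CaretPos × Bool)
  | .leaf => []
  | .node l r =>
      interiorInfo l ++ (CaretPos.right, decide (r ≠ BinTree.leaf)) :: rightInfo r

/-- Infix-ordered list of `(position, has right child)` over all carets of a
tree; the root counts as a left caret. -/
def infoList : BinTree → List (CaretPos × Bool)
  | .leaf => []
  | .node l r =>
      leftInfo l ++ (CaretPos.left, decide (r ≠ BinTree.leaf)) :: rightInfo r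

/-- The number of left carets of a tree (the root counts as a left caret). -/
def numLeftCarets (T : BinTree) : ℕ := ((infoList T).map Prod.fst).count CaretPos.left

/-- The number of interior carets of a tree. -/
def numInteriorCarets (T : BinTree) : ℕ :=
  ((infoList T).map Prod.fst).count CaretPos.interior

/-- The number of right carets of a tree. -/
def numRightCarets (T : BinTree) : ℕ := ((infoList T).map Prod.fst).count CaretPos.right

/-- Fordham's seven caret types. -/
inductive CaretType : Type
  | L0 | LL | I0 | IR | RI | RNI | R0
  deriving DecidableEq

/-- The type of the caret numbered `i` (infix order), given the infix
information list of the tree. -/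
def typeOf (l : List (CaretPos × Bool)) (i : ℕ) : CaretType :=
  if i = 0 then CaretType.L0
  else
    match l[i]? with
    | some (CaretPos.left, _) => CaretType.LL
    | some (CaretPos.interior, b) => if b then CaretType.IR else CaretType.I0
    | some (CaretPos.right, _) =>
        match l[i + 1]? with
        | some (CaretPos.interior, _) => CaretType.RI
        | _ =>
            if (l.drop (i + 1)).any (fun p => p.1 == CaretPos.interior) then CaretType.RNI
            else CaretType.R0
    | none => CaretType.R0

/-- The type of the caret numbered `i` (infix order) in the tree `T`. -/
def caretTypeAt (T : BinTree) (i : ℕ) : CaretType := typeOf (infoList T) i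

/-- The infix-ordered list of caret types of a tree. -/
def caretTypes (T : BinTree) : List CaretType :=
  (List.range T.numCarets).map (caretTypeAt T)

/-- Fordham's weight of a pair of caret types: the pair `(L₀, L₀)` has weight
`0`, and all other weights are given by Fordham's table. -/
def weight : CaretType → CaretType → ℕ
  | .L0, _ => 0
  | _, .L0 => 0
  | .R0, .R0 => 0 | .R0, .RNI => 2 | .R0, .RI => 2 | .R0, .LL => 1 | .R0, .I0 => 1
  | .R0, .IR => 3
  | .RNI, .R0 => 2 | .RNI, .RNI => 2 | .RNI, .RI => 2 | .RNI, .LL => 1 | .RNI, .I0 => 1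
  | .RNI, .IR => 3
  | .RI, .R0 => 2 | .RI, .RNI => 2 | .RI, .RI => 2 | .RI, .LL => 1 | .RI, .I0 => 3
  | .RI, .IR => 3
  | .LL, .R0 => 1 | .LL, .RNI => 1 | .LL, .RI => 1 | .LL, .LL => 2 | .LL, .I0 => 2
  | .LL, .IR => 2
  | .I0, .R0 => 1 | .I0, .RNI => 1 | .I0, .RI => 3 | .I0, .LL => 2 | .I0, .I0 => 2
  | .I0, .IR => 4
  | .IR, .R0 => 3 | .IR, .RNI => 3 | .IR, .RI => 3 | .IR, .LL => 2 | .IR, .I0 => 4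
  | .IR, .IR => 4

open scoped commutatorElement

/-- The defining relators of Thompson's group `F` in the finite presentation
`⟨x₀, x₁ ∣ [x₀x₁⁻¹, x₀⁻¹x₁x₀], [x₀x₁⁻¹, x₀⁻²x₁x₀²]⟩`. -/
def thompsonRels : Set (FreeGroup (Fin 2)) :=
  {⁅FreeGroup.of (0 : Fin 2) * (FreeGroup.of (1 : Fin 2))⁻¹,
      (FreeGroup.of (0 : Fin 2))⁻¹ * FreeGroup.of (1 : Fin 2) * FreeGroup.of (0 : Fin 2)⁆,
    ⁅FreeGroup.of (0 : Fin 2) * (FreeGroup.of (1 : Fin 2))⁻¹,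
      (FreeGroup.of (0 : Fin 2))⁻¹ * (FreeGroup.of (0 : Fin 2))⁻¹ * FreeGroup.of (1 : Fin 2) * FreeGroup.of (0 : Fin 2) *
        FreeGroup.of (0 : Fin 2)⁆}

/-- Thompson's group `F`. -/
abbrev F : Type := PresentedGroup thompsonRels

/-- The generator `x₀` of `F`. -/
def x0 : F := PresentedGroup.of (0 : Fin 2)

/-- The generator `x₁` of `F`. -/
def x1 : F := PresentedGroup.of (1 : Fin 2)

/-- The generators `x_n` of the infinite presentation:
`x_n = x₀^{-(n-1)} x₁ x₀^{n-1}` for `n ≥ 1`. -/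
def x : ℕ → F
  | 0 => x0
  | n + 1 => (x0 ^ n)⁻¹ * x1 * x0 ^ n

/-- The symmetrized generating set `{x₀^{±1}, x₁^{±1}}` of `F`. -/
def genSet : Set F := {x0, x0⁻¹, x1, x1⁻¹}

/-- The word length of `w ∈ F` with respect to the generating set `{x₀, x₁}`:
the least `n` such that `w` is a product of `n` elements of
`{x₀^{±1}, x₁^{±1}}`. -/
def wordLength (w : F) : ℕ :=
  sInf {n | ∃ l : List F, l.length = n ∧ (∀ g ∈ l, g ∈ genSet) ∧ l.prod = w}

/-- The positive element `x₀^{E(0)} x₁^{E(1)} ⋯ x_m^{E(m)}` of `F` built from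
the leaf exponents of a tree. -/
def posElt (T : BinTree) : F := ((T.exps).zipIdx.map fun p => x p.2 ^ p.1).prod

/-- The element of `F` represented by the tree pair diagram `(T₋, T₊)`:
the positive part comes from the leaf exponents of `T₊` and the negative part
from those of `T₋`. -/
def toF (Tm Tp : BinTree) : F := posElt Tp * (posElt Tm)⁻¹

/-- `x_{i₁}^{r₁} ⋯ x_{i_k}^{r_k}` for a list of indices and exponents. -/
def prodX (idx exps : List ℕ) : F := (List.zipWith (fun i r => x i ^ r) idx exps).prod

/-- The element `x₀^{r₀} x_{i₁}^{r₁} ⋯ x_{i_k}^{r_k} x_{j_l}^{-s_l} ⋯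
x_{j₁}^{-s₁} x₀^{-s₀}` of `F` (normal form with the `x₀`-exponents
separated). -/
def nfElt0 (r0 : ℕ) (is rs js ss : List ℕ) (s0 : ℕ) : F :=
  x0 ^ r0 * prodX is rs * (x0 ^ s0 * prodX js ss)⁻¹

/-- Normal form data `x_{i₁}^{r₁} ⋯ x_{i_k}^{r_k} x_{j_l}^{-s_l} ⋯ x_{j₁}^{-s₁}`:
positive exponents, strictly increasing indices, and the uniqueness condition
that whenever both `x_i` and `x_i⁻¹` occur so does `x_{i+1}` or `x_{i+1}⁻¹`. -/
def IsNF (is rs js ss : List ℕ) : Prop :=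
  is.length = rs.length ∧ js.length = ss.length ∧
    is.Chain' (· < ·) ∧ js.Chain' (· < ·) ∧
    (∀ r ∈ rs, 0 < r) ∧ (∀ s ∈ ss, 0 < s) ∧
    (∀ i : ℕ, i ∈ is → i ∈ js → (i + 1 ∈ is ∨ i + 1 ∈ js))

/-- Normal form data with the `x₀`-exponents separated (without the
uniqueness condition): positive exponents and strictly increasing positive
indices. -/
def IsWeakNF0 (_r0 : ℕ) (is rs js ss : List ℕ) (_s0 : ℕ) : Prop :=
  is.length = rs.length ∧ js.length = ss.length ∧
    is.Chain' (· < ·) ∧ js.Chain' (· < ·) ∧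
    (∀ i ∈ is, 0 < i) ∧ (∀ j ∈ js, 0 < j) ∧
    (∀ r ∈ rs, 0 < r) ∧ (∀ s ∈ ss, 0 < s)

/-- Unique normal form data with the `x₀`-exponents separated: additionally,
whenever both `x_i` and `x_i⁻¹` occur, so does `x_{i+1}` or `x_{i+1}⁻¹`. -/
def IsNF0 (r0 : ℕ) (is rs js ss : List ℕ) (s0 : ℕ) : Prop :=
  IsWeakNF0 r0 is rs js ss s0 ∧
    (0 < r0 → 0 < s0 → (1 ∈ is ∨ 1 ∈ js)) ∧
    (∀ i : ℕ, i ∈ is → i ∈ js → (i + 1 ∈ is ∨ i + 1 ∈ js))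

/-- `w` is strictly positive: its normal form consists entirely of generators
with positive exponents. -/
def IsStrictlyPositive (w : F) : Prop :=
  ∃ is rs : List ℕ, is.length = rs.length ∧ is.Chain' (· < ·) ∧
    (∀ r ∈ rs, 0 < r) ∧ w = prodX is rs

/-- `w` is a dead end element: every generator decreases its word length. -/
def IsDeadEnd (w : F) : Prop :=
  ∀ α ∈ genSet, wordLength (w * α) + 1 = wordLength w

/-- The leaf-exponent function determined by the negative part
`x_{j_l}^{-s_l} ⋯ x_{j₁}^{-s₁} x₀^{-s₀}` of a normal form. -/
def nfExp (s0 : ℕ) (js ss : List ℕ) (k : ℕ) : ℕ :=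
  if k = 0 then s0 else (((js.zip ss).filter fun p => p.1 == k).map Prod.snd).sum

/-- The tree `T` realizes the leaf-exponent function `e`: its leaf exponents
agree with `e`, and `e` vanishes beyond the leaves of `T`. -/
def RealizesExps (T : BinTree) (e : ℕ → ℕ) : Prop :=
  ∀ k : ℕ, ((BinTree.exps T)[k]?).getD 0 = e k

/-- The weights, per caret type, of the nested traversal method. -/
def omegaWeight : CaretType → ℕ
  | .L0 => 0 | .R0 => 0 | .LL => 1 | .I0 => 1 | .RNI => 2 | .RI => 2 | .IR => 3

/-!
`F` acts on the Cantor set of binary streams: `x₀` by `0s ↦ 00s`, `10s ↦ 01s`, `11s ↦ 1s`, and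
`x_{n+1}` as `x_n` on the right half `1s`, fixing the left half. An element
`x₀^{r₀} ⋯ (x₀^{s₀} ⋯)⁻¹` then acts as `x₀^{r₀} ∘ ρ ∘ x₀^{-s₀}`, with `ρ` the copy on the right
half of the element obtained by dropping the `x₀`-exponents and lowering all indices. The
streams `0ᵃ1t` detect `r₀ - s₀`. If two normal forms with the same action had different `s₀`,
the one with the larger `s₀` would have `r₀, s₀ > 0` and a `ρ` fixing the left half, whereas the
normal form condition at `0` makes `ρ` move some stream `0t`. By induction the exponents of a
normal form are determined by the action, so normal forms are unique. The leaf exponents of a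
reduced tree pair diagram satisfy the normal form condition, so `x_{j₁}^{s₁}, …` are the leaf
exponents of `T₋`.

The leaves before `j_l` are those of the left subtree of the root of `T₋`; it has `j_l` leaves
and `j_l - 1` carets. Moving `x₁⁻¹` to the right with `x_k⁻¹ x_j^s = x_j^s x_{k+s}⁻¹` (`j < k`),
it passes through this subtree's leaf exponents and arrives as `x_{j_l}⁻¹`, which cancels one
factor of `x_{j_l}^{s_l}` (`s_l > 0` since the left child of the right child of the root is
a caret).
-/

open Stream' (cons)

abbrev Cantor : Type := Stream' Bool

lemma Cantor.exists_eq_cons (s : Cantor) : ∃ a t, s = cons a t :=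
  ⟨s.head, s.tail, (Stream'.eta s).symm⟩

lemma Cantor.exists_eq_cons_cons (s : Cantor) : ∃ a b t, s = cons a (cons b t) := by
  obtain ⟨a, s, rfl⟩ := Cantor.exists_eq_cons s
  obtain ⟨b, s, rfl⟩ := Cantor.exists_eq_cons s
  exact ⟨a, b, s, rfl⟩

@[simp] lemma Cantor.cons_inj {a b : Bool} {s t : Cantor} : cons a s = cons b t ↔ a = b ∧ s = t :=
  Stream'.cons_injective2.eq_iff

/-- `x₀` acts by `0s ↦ 00s`, `10s ↦ 01s`, `11s ↦ 1s`. -/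
def x0Perm : Equiv.Perm Cantor where
  toFun s := if s.head then (if s.tail.head then s.tail else cons false (cons true s.tail.tail))
    else cons false (cons false s.tail)
  invFun s := if s.head then cons true s
    else (if s.tail.head then cons true (cons false s.tail.tail) else s.tail)
  left_inv s := by
    obtain ⟨a, b, s, rfl⟩ := Cantor.exists_eq_cons_cons s
    cases a <;> cases b <;> simp
  right_inv s := by
    obtain ⟨a, b, s, rfl⟩ := Cantor.exists_eq_cons_cons s
    cases a <;> cases b <;> simp

@[simp] lemma x0Perm_false (s : Cantor) : x0Perm (cons false s) = cons false (cons false s) := by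
  simp [x0Perm]

@[simp] lemma x0Perm_true_false (s : Cantor) :
    x0Perm (cons true (cons false s)) = cons false (cons true s) := by
  simp [x0Perm]

@[simp] lemma x0Perm_true_true (s : Cantor) : x0Perm (cons true (cons true s)) = cons true s := by
  simp [x0Perm]

def onRightHalf : Equiv.Perm Cantor →* Equiv.Perm Cantor :=
  MonoidHom.mk' (fun π =>
    { toFun s := if s.head then cons true (π s.tail) else s
      invFun s := if s.head then cons true (π.symm s.tail) else s
      left_inv s := by obtain ⟨a, s, rfl⟩ := Cantor.exists_eq_cons s; cases a <;> simp
      right_inv s := by obtain ⟨a, s, rfl⟩ := Cantor.exists_eq_cons s; cases a <;> simp })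
    (fun π ρ => Equiv.ext fun s => by
      obtain ⟨a, s, rfl⟩ := Cantor.exists_eq_cons s
      cases a <;> simp)

@[simp] lemma onRightHalf_true (π : Equiv.Perm Cantor) (s : Cantor) :
    onRightHalf π (cons true s) = cons true (π s) := by
  simp [onRightHalf]

@[simp] lemma onRightHalf_false (π : Equiv.Perm Cantor) (s : Cantor) :
    onRightHalf π (cons false s) = cons false s := by
  simp [onRightHalf]

lemma onRightHalf_injective : Function.Injective onRightHalf := fun π ρ h => Equiv.ext fun s => by
  have := congrArg (fun σ : Equiv.Perm Cantor => σ (cons true s)) h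
  exact Stream'.cons_injective_right true (by simpa using this)

lemma x0Perm_conj_onRightHalf (π : Equiv.Perm Cantor) :
    x0Perm⁻¹ * onRightHalf π * x0Perm = onRightHalf (onRightHalf π) := by
  refine Equiv.ext fun s => ?_
  obtain ⟨a, b, s, rfl⟩ := Cantor.exists_eq_cons_cons s
  rw [Equiv.Perm.mul_apply, Equiv.Perm.mul_apply, Equiv.Perm.inv_eq_iff_eq]
  cases a <;> cases b <;> simp

def xPerm : ℕ → Equiv.Perm Cantor
  | 0 => x0Perm
  | n + 1 => onRightHalf (xPerm n)

lemma xPerm_conj {i j : ℕ} (h : i < j) : (xPerm i)⁻¹ * xPerm j * xPerm i = xPerm (j + 1) := by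
  induction i generalizing j with
  | zero =>
    obtain ⟨j, rfl⟩ := Nat.exists_eq_add_of_lt h
    exact x0Perm_conj_onRightHalf _
  | succ i ih =>
    obtain ⟨j, rfl⟩ : ∃ j', j = j' + 1 := ⟨j - 1, by omega⟩
    simp only [xPerm, ← map_inv, ← map_mul, ih (Nat.lt_of_succ_lt_succ h)]

lemma commutatorElement_mul_inv_eq_one_iff {G : Type*} [Group G] {a b c : G} :
    ⁅a * b⁻¹, c⁆ = 1 ↔ a⁻¹ * c * a = b⁻¹ * c * b := by
  rw [commutatorElement_eq_one_iff_mul_comm]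
  constructor <;> intro h
  · calc a⁻¹ * c * a = a⁻¹ * (a * b⁻¹ * c) * b := by rw [h]; group
      _ = b⁻¹ * c * b := by group
  · calc a * b⁻¹ * c = a * (b⁻¹ * c * b) * b⁻¹ := by group
      _ = c * (a * b⁻¹) := by rw [← h]; group

lemma xPerm_relators : ∀ r ∈ thompsonRels, FreeGroup.lift ![x0Perm, xPerm 1] r = 1 := by
  have conj0 : ∀ j, 0 < j → x0Perm⁻¹ * xPerm j * x0Perm = xPerm (j + 1) := fun _ => xPerm_conj
  have h3 : x0Perm⁻¹ * x0Perm⁻¹ * xPerm 1 * x0Perm * x0Perm = xPerm 3 := by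
    rw [← conj0 2 two_pos, ← conj0 1 one_pos]; group
  simp only [thompsonRels, Set.mem_insert_iff, Set.mem_singleton_iff]
  rintro r (rfl | rfl) <;>
    simp only [map_commutatorElement, map_mul, map_inv, FreeGroup.lift_apply_of,
      Matrix.cons_val_zero, Matrix.cons_val_one] <;>
    rw [commutatorElement_mul_inv_eq_one_iff]
  · rw [conj0 1 one_pos, conj0 2 two_pos, xPerm_conj (by norm_num : 1 < 1 + 1)]
  · rw [h3, conj0 3 three_pos, xPerm_conj (by norm_num : 1 < 3)]

def action : F →* Equiv.Perm Cantor := PresentedGroup.toGroup xPerm_relators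

lemma action_x0 : action x0 = x0Perm := PresentedGroup.toGroup.of xPerm_relators

lemma action_x1 : action x1 = xPerm 1 := PresentedGroup.toGroup.of xPerm_relators

lemma action_x : ∀ n, action (x n) = xPerm n
  | 0 => action_x0
  | n + 1 => by
    rw [x, map_mul, map_mul, map_inv, map_pow, action_x0, action_x1]
    induction n with
    | zero => simp
    | succ n ih =>
      rw [pow_succ, mul_inv_rev, ← xPerm_conj (Nat.zero_lt_succ n), ← ih]
      simp only [xPerm]
      group

lemma x_one : x 1 = x1 := by simp [x]

lemma x0_conj {k : ℕ} (hk : 0 < k) : x0⁻¹ * x k * x0 = x (k + 1) := by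
  obtain ⟨k, rfl⟩ := Nat.exists_eq_add_of_lt hk
  simp only [x, zero_add, pow_succ]
  group

lemma x_succ_conj_succ {i j : ℕ} (hi : 0 < i) (hj : 0 < j) :
    (x (i + 1))⁻¹ * x (j + 1) * x (i + 1) = x0⁻¹ * ((x i)⁻¹ * x j * x i) * x0 := by
  rw [← x0_conj hi, ← x0_conj hj]
  group

lemma x_one_conj_of_commutator {k : ℕ} (hk : 0 < k) (h : ⁅x0 * x1⁻¹, x k⁆ = 1) :
    x1⁻¹ * x k * x1 = x (k + 1) := by
  rw [commutatorElement_mul_inv_eq_one_iff] at h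
  rw [← h, x0_conj hk]

lemma x1_conj_x2 : x1⁻¹ * x 2 * x1 = x 3 := by
  refine x_one_conj_of_commutator two_pos ?_
  have h : ⁅x0 * x1⁻¹, x0⁻¹ * x1 * x0⁆ = 1 := by
    have h := PresentedGroup.one_of_mem (rels := thompsonRels) (Set.mem_insert _ _)
    simp only [map_commutatorElement, map_mul, map_inv] at h
    exact h
  simpa [x] using h

lemma x1_conj_x3 : x1⁻¹ * x 3 * x1 = x 4 := by
  refine x_one_conj_of_commutator three_pos ?_
  have h : ⁅x0 * x1⁻¹, x0⁻¹ * x0⁻¹ * x1 * x0 * x0⁆ = 1 := by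
    have h := PresentedGroup.one_of_mem (rels := thompsonRels) (Set.mem_insert_of_mem _ rfl)
    simp only [map_commutatorElement, map_mul, map_inv] at h
    exact h
  simpa [x, pow_two, mul_assoc] using h

lemma x1_conj {k : ℕ} (hk : 2 ≤ k) : x1⁻¹ * x k * x1 = x (k + 1) := by
  induction k using Nat.strong_induction_on with
  | _ k ih =>
  obtain rfl | rfl | ⟨p, rfl⟩ : k = 2 ∨ k = 3 ∨ ∃ p, k = p + 4 :=
    by rcases Nat.exists_eq_add_of_le hk with ⟨_ | _ | p, rfl⟩ <;> simp; exact .inr ⟨p, by omega⟩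
  · exact x1_conj_x2
  · exact x1_conj_x3
  have e2 : (x 2)⁻¹ * x (p + 3) * x 2 = x (p + 4) := by
    rw [x_succ_conj_succ (i := 1) (j := p + 2) one_pos (by omega), x_one, ih (p + 2) (by omega)
      (by omega), x0_conj (by omega)]
  have e3 : (x 3)⁻¹ * x (p + 4) * x 3 = x (p + 5) := by
    rw [x_succ_conj_succ (i := 2) (j := p + 3) two_pos (by omega), e2, x0_conj (by omega)]
  calc x1⁻¹ * x (p + 4) * x1 = x1⁻¹ * ((x 2)⁻¹ * x (p + 3) * x 2) * x1 := by rw [e2]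
    _ = (x1⁻¹ * x 2 * x1)⁻¹ * (x1⁻¹ * x (p + 3) * x1) * (x1⁻¹ * x 2 * x1) := by group
    _ = x (p + 5) := by rw [x1_conj_x2, ih (p + 3) (by omega) (by omega), e3]

lemma x_conj {i j : ℕ} (h : i < j) : (x i)⁻¹ * x j * x i = x (j + 1) := by
  induction i generalizing j with
  | zero => exact x0_conj h
  | succ i ih =>
    obtain ⟨j, rfl⟩ : ∃ j', j = j' + 1 := ⟨j - 1, by omega⟩
    rcases Nat.eq_zero_or_pos i with rfl | hi
    · rw [x_one]; exact x1_conj (by omega)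
    · rw [x_succ_conj_succ hi (by omega), ih (by omega), x0_conj (by omega)]

lemma x_inv_mul_pow {j k : ℕ} (h : j < k) (s : ℕ) :
    (x k)⁻¹ * x j ^ s = x j ^ s * (x (k + s))⁻¹ := by
  induction s generalizing k with
  | zero => simp
  | succ s ih =>
    have hflip : (x k)⁻¹ * x j = x j * (x (k + 1))⁻¹ := by
      rw [← x_conj h]; group
    rw [pow_succ', ← mul_assoc, hflip, mul_assoc, ih (by omega), ← mul_assoc, add_right_comm,
      add_assoc]

-- Exponent lists are compared through `getD _ _ 0`, so trailing zeros do not matter.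
def denseProd (es : List ℕ) (a : ℕ) : F := ((es.zipIdx a).map fun p => x p.2 ^ p.1).prod

@[simp] lemma denseProd_nil (a : ℕ) : denseProd [] a = 1 := rfl

@[simp] lemma denseProd_cons (e : ℕ) (es : List ℕ) (a : ℕ) :
    denseProd (e :: es) a = x a ^ e * denseProd es (a + 1) := by
  simp [denseProd]

lemma action_denseProd_succ (es : List ℕ) (a : ℕ) :
    action (denseProd es (a + 1)) = onRightHalf (action (denseProd es a)) := by
  induction es generalizing a with
  | nil => simp
  | cons e es ih => simp [action_x, xPerm, ih]

lemma denseProd_congr {es fs : List ℕ} (h : ∀ k, es.getD k 0 = fs.getD k 0) (a : ℕ) :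
    denseProd es a = denseProd fs a := by
  induction es generalizing fs a with
  | nil =>
    induction fs generalizing a with
    | nil => rfl
    | cons f fs ih =>
      have hf : f = 0 := by simpa using (h 0).symm
      rw [denseProd_cons, hf, pow_zero, one_mul, ← ih (fun k => by simpa using h (k + 1))]
      rfl
  | cons e es ih =>
    have h0 : e = fs.getD 0 0 := by simpa using h 0
    cases fs with
    | nil =>
      simp only [List.getD_nil] at h0
      rw [denseProd_cons, h0, pow_zero, one_mul, ih (fs := []) (fun k => by simpa using h (k + 1))]
      rfl
    | cons f fs =>
      simp only [List.getD_cons_zero] at h0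
      rw [denseProd_cons, denseProd_cons, h0, ih (fun k => by simpa using h (k + 1))]

def denseFrac (es fs : List ℕ) : F := denseProd es 0 * (denseProd fs 0)⁻¹

lemma action_denseFrac (es fs : List ℕ) :
    action (denseFrac es fs) = x0Perm ^ es.getD 0 0 *
      onRightHalf (action (denseFrac es.tail fs.tail)) * (x0Perm ^ fs.getD 0 0)⁻¹ := by
  cases es <;> cases fs <;>
    simp [denseFrac, action_denseProd_succ, action_x, xPerm, mul_assoc]

lemma _root_.List.getD_tail {α : Type*} (l : List α) (d : α) (k : ℕ) :
    l.tail.getD k d = l.getD (k + 1) d := by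
  cases l <;> simp

def zerosThenOne : ℕ → Cantor → Cantor
  | 0, t => cons true t
  | a + 1, t => cons false (zerosThenOne a t)

@[simp] lemma zerosThenOne_zero (t : Cantor) : zerosThenOne 0 t = cons true t := rfl

@[simp] lemma zerosThenOne_succ (a : ℕ) (t : Cantor) :
    zerosThenOne (a + 1) t = cons false (zerosThenOne a t) := rfl

lemma zerosThenOne_injective {a b : ℕ} {t u : Cantor} (h : zerosThenOne a t = zerosThenOne b u) :
    a = b := by
  induction a generalizing b with
  | zero => cases b <;> simp_all
  | succ a ih =>
    cases b with
    | zero => simp at h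
    | succ b => rw [ih (by simpa using h)]

lemma x0Perm_pow_zerosThenOne (k a : ℕ) (t : Cantor) :
    (x0Perm ^ k) (zerosThenOne (a + 1) t) = zerosThenOne (a + k + 1) t := by
  induction k with
  | zero => rfl
  | succ k ih =>
    rw [pow_succ', Equiv.Perm.mul_apply, ih]
    exact x0Perm_false _

lemma x0Perm_pow_true_false (c : ℕ) (t : Cantor) :
    (x0Perm ^ (c + 1)) (cons true (cons false t)) = zerosThenOne (c + 1) t := by
  rw [pow_succ, Equiv.Perm.mul_apply, x0Perm_true_false]
  simpa using x0Perm_pow_zerosThenOne c 0 t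

lemma x0Perm_pow_mul_onRightHalf_apply (r s b : ℕ) (ρ : Equiv.Perm Cantor) (t : Cantor) :
    (x0Perm ^ r * onRightHalf ρ * (x0Perm ^ s)⁻¹) (zerosThenOne (s + b + 1) t) =
      zerosThenOne (r + b + 1) t := by
  have hs : (x0Perm ^ s)⁻¹ (zerosThenOne (s + b + 1) t) = zerosThenOne (b + 1) t := by
    rw [Equiv.Perm.inv_eq_iff_eq, x0Perm_pow_zerosThenOne, add_comm b]
  rw [Equiv.Perm.mul_apply, Equiv.Perm.mul_apply, hs, zerosThenOne_succ, onRightHalf_false,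
    ← zerosThenOne_succ, x0Perm_pow_zerosThenOne, add_comm b]

lemma conj_apply_ne {α : Type*} (σ : Equiv.Perm α) {π : Equiv.Perm α} {y : α} (h : π y ≠ y) :
    (σ * π * σ⁻¹) (σ y) ≠ σ y := by
  simpa [Equiv.Perm.mul_apply] using h

def IsNFExps (es fs : List ℕ) : Prop :=
  ∀ k, 0 < es.getD k 0 → 0 < fs.getD k 0 → 0 < es.getD (k + 1) 0 ∨ 0 < fs.getD (k + 1) 0

lemma IsNFExps.tail {es fs : List ℕ} (h : IsNFExps es fs) : IsNFExps es.tail fs.tail := by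
  intro k
  simpa only [List.getD_tail] using h (k + 1)

lemma IsNFExps.getD_one_pos {es fs : List ℕ} (h : IsNFExps es fs) (he : 0 < es.getD 0 0)
    (hf : 0 < fs.getD 0 0) : 0 < es.tail.getD 0 0 ∨ 0 < fs.tail.getD 0 0 := by
  simpa only [List.getD_tail] using h 0 he hf

theorem exists_action_denseFrac_cons_false_ne {es fs : List ℕ} (h : IsNFExps es fs)
    (h0 : 0 < es.getD 0 0 ∨ 0 < fs.getD 0 0) :
    ∃ t, action (denseFrac es fs) (cons false t) ≠ cons false t := by
  induction hn : es.length + fs.length using Nat.strong_induction_on generalizing es fs with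
  | _ n ih =>
  rw [action_denseFrac]
  set r := es.getD 0 0
  set s := fs.getD 0 0
  set ρ := action (denseFrac es.tail fs.tail)
  by_cases hrs : r = s
  · obtain ⟨c, hc⟩ : ∃ c, r = c + 1 := ⟨r - 1, by omega⟩
    have hlen : es.tail.length + fs.tail.length < n := by
      obtain ⟨e, es, rfl⟩ := List.exists_cons_of_ne_nil (show es ≠ [] by rintro rfl; simp [r] at hc)
      simp only [List.tail_cons, List.length_cons, List.length_tail] at hn ⊢
      omega
    obtain ⟨t, ht⟩ := ih _ hlen h.tail (h.getD_one_pos (by omega) (by omega)) rfl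
    -- `0ʳ1t = x₀ʳ(10t)` is moved because `10t` is moved by `onRightHalf ρ`
    refine ⟨zerosThenOne c t, ?_⟩
    have key := conj_apply_ne (x0Perm ^ r) (y := cons true (cons false t))
      (show onRightHalf ρ _ ≠ _ by simpa using ht)
    rwa [← hrs, ← zerosThenOne_succ, ← x0Perm_pow_true_false, ← hc]
  · refine ⟨zerosThenOne s (Stream'.const true), fun hfix => hrs ?_⟩
    have := x0Perm_pow_mul_onRightHalf_apply r s 0 ρ (Stream'.const true)
    rw [add_zero, add_zero, zerosThenOne_succ, hfix] at this
    have := zerosThenOne_injective (a := s + 1) this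
    omega

lemma apply_cons_false_of_x0Perm_pow_mul_eq {r s c : ℕ} {ρ ρ' : Equiv.Perm Cantor} (hc : 0 < c)
    (h : x0Perm ^ r * onRightHalf ρ * (x0Perm ^ s)⁻¹ =
      x0Perm ^ (r + c) * onRightHalf ρ' * (x0Perm ^ (s + c))⁻¹) (t : Cantor) :
    ρ' (cons false t) = cons false t := by
  have hconj : onRightHalf ρ' = (x0Perm ^ c)⁻¹ * onRightHalf ρ * x0Perm ^ c := by
    calc onRightHalf ρ'
        = (x0Perm ^ (r + c))⁻¹ * (x0Perm ^ (r + c) * onRightHalf ρ' * (x0Perm ^ (s + c))⁻¹) *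
            x0Perm ^ (s + c) := by group
      _ = (x0Perm ^ c)⁻¹ * onRightHalf ρ * x0Perm ^ c := by rw [← h, pow_add, pow_add]; group
  obtain ⟨c, rfl⟩ := Nat.exists_eq_add_of_lt hc
  have := congrArg (fun σ : Equiv.Perm Cantor => σ (cons true (cons false t))) hconj
  simp only [Equiv.Perm.mul_apply, zero_add, x0Perm_pow_true_false, zerosThenOne_succ,
    onRightHalf_false, onRightHalf_true] at this
  rw [← zerosThenOne_succ, ← x0Perm_pow_true_false] at this
  simpa using this

lemma getD_zero_add_eq_of_action_eq {es fs es' fs' : List ℕ}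
    (heq : action (denseFrac es fs) = action (denseFrac es' fs')) :
    es.getD 0 0 + fs'.getD 0 0 = es'.getD 0 0 + fs.getD 0 0 := by
  rw [action_denseFrac es fs, action_denseFrac es' fs'] at heq
  have h := x0Perm_pow_mul_onRightHalf_apply (es.getD 0 0) (fs.getD 0 0) (fs'.getD 0 0)
    (action (denseFrac es.tail fs.tail)) (Stream'.const true)
  rw [heq, add_comm (fs.getD 0 0), x0Perm_pow_mul_onRightHalf_apply] at h
  have := zerosThenOne_injective h
  omega

lemma getD_zero_le_of_action_eq {es fs es' fs' : List ℕ} (h' : IsNFExps es' fs')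
    (heq : action (denseFrac es fs) = action (denseFrac es' fs')) :
    fs'.getD 0 0 ≤ fs.getD 0 0 := by
  by_contra! hlt
  obtain ⟨c, hc⟩ := Nat.exists_eq_add_of_lt hlt
  have hsum := getD_zero_add_eq_of_action_eq heq
  have hfix := heq
  rw [action_denseFrac es fs, action_denseFrac es' fs', hc,
    show es'.getD 0 0 = es.getD 0 0 + (c + 1) by omega, add_assoc] at hfix
  -- the rest of `es', fs'` would fix the left half, which the normal form condition at `0` forbids
  obtain ⟨t, ht⟩ :=
    exists_action_denseFrac_cons_false_ne h'.tail (h'.getD_one_pos (by omega) (by omega))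
  exact ht (apply_cons_false_of_x0Perm_pow_mul_eq c.succ_pos hfix t)

theorem getD_eq_of_action_denseFrac_eq {es fs es' fs' : List ℕ} (h : IsNFExps es fs)
    (h' : IsNFExps es' fs') (heq : action (denseFrac es fs) = action (denseFrac es' fs')) (k : ℕ) :
    es.getD k 0 = es'.getD k 0 ∧ fs.getD k 0 = fs'.getD k 0 := by
  induction hn : es.length + fs.length + es'.length + fs'.length using Nat.strong_induction_on
    generalizing es fs es' fs' k with
  | _ n ih =>
  have hs : fs.getD 0 0 = fs'.getD 0 0 :=
    le_antisymm (getD_zero_le_of_action_eq h heq.symm) (getD_zero_le_of_action_eq h' heq)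
  have hr : es.getD 0 0 = es'.getD 0 0 := by
    have := getD_zero_add_eq_of_action_eq heq
    omega
  cases k with
  | zero => exact ⟨hr, hs⟩
  | succ k =>
    rcases Nat.eq_zero_or_pos n with rfl | hpos
    · simp_all [List.length_eq_zero_iff]
    have htail : action (denseFrac es.tail fs.tail) = action (denseFrac es'.tail fs'.tail) := by
      rw [action_denseFrac es fs, action_denseFrac es' fs', hr, hs] at heq
      exact onRightHalf_injective (mul_left_cancel (mul_right_cancel heq))
    simpa only [List.getD_tail] using
      ih _ (by simp only [List.length_tail]; omega) h.tail h'.tail htail k rfl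

def sparseExp (is rs : List ℕ) (k : ℕ) : ℕ := ((is.zip rs).lookup k).getD 0

@[simp] lemma sparseExp_nil (rs : List ℕ) (k : ℕ) : sparseExp [] rs k = 0 := rfl

@[simp] lemma sparseExp_cons (i r : ℕ) (is rs : List ℕ) (k : ℕ) :
    sparseExp (i :: is) (r :: rs) k = if k = i then r else sparseExp is rs k := by
  by_cases h : k = i
  · simp [sparseExp, h]
  · have : (k == i) = false := by simpa using h
    simp [sparseExp, List.lookup_cons, h, this]

lemma sparseExp_eq_zero_of_notMem {is rs : List ℕ} {k : ℕ} (hk : k ∉ is) :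
    sparseExp is rs k = 0 := by
  induction is generalizing rs with
  | nil => rfl
  | cons i is ih =>
    cases rs with
    | nil => rfl
    | cons r rs => simp_all

lemma sparseExp_pos_iff {is rs : List ℕ} (hlen : is.length = rs.length) (hpos : ∀ r ∈ rs, 0 < r)
    {k : ℕ} : 0 < sparseExp is rs k ↔ k ∈ is := by
  induction is generalizing rs with
  | nil => simp
  | cons i is ih =>
    obtain ⟨r, rs, rfl⟩ := List.exists_cons_of_length_eq_add_one hlen.symm
    by_cases h : k = i
    · simp [h, hpos r (by simp)]
    · simp [h, ih (by simpa using hlen) (fun r hr => hpos r (by simp [hr]))]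

lemma sparseExp_getElem {is rs : List ℕ} (hnd : is.Nodup) (hlen : is.length = rs.length) {q : ℕ}
    (hq : q < is.length) : sparseExp is rs is[q] = rs[q]'(hlen ▸ hq) := by
  induction is generalizing rs q with
  | nil => simp at hq
  | cons i is ih =>
    obtain ⟨r, rs, rfl⟩ := List.exists_cons_of_length_eq_add_one hlen.symm
    cases q with
    | zero => simp
    | succ q =>
      have hq' : q < is.length := by simpa using hq
      have hi : is[q] ≠ i := fun h => (List.nodup_cons.mp hnd).1 (h ▸ List.getElem_mem hq')
      simp [hi, ih (List.nodup_cons.mp hnd).2 (by simpa using hlen) hq']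

lemma sparseExp_set {is rs : List ℕ} (hnd : is.Nodup) (hlen : is.length = rs.length) {q : ℕ}
    (hq : q < is.length) (v : ℕ) :
    sparseExp is (rs.set q v) = Function.update (sparseExp is rs) is[q] v := by
  induction is generalizing rs q with
  | nil => simp at hq
  | cons i is ih =>
    obtain ⟨r, rs, rfl⟩ := List.exists_cons_of_length_eq_add_one hlen.symm
    funext k
    cases q with
    | zero => by_cases h : k = i <;> simp [h]
    | succ q =>
      have hq' : q < is.length := by simpa using hq
      have hi : is[q] ≠ i := fun h => (List.nodup_cons.mp hnd).1 (h ▸ List.getElem_mem hq')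
      by_cases h : k = i
      · simp [h, hi.symm]
      · simp [h, ih (List.nodup_cons.mp hnd).2 (by simpa using hlen) hq', Function.update_apply]

lemma exists_getElem_eq_of_sparseExp_pos {is rs : List ℕ} (hnd : is.Nodup)
    (hlen : is.length = rs.length) {k : ℕ} (hk : 0 < sparseExp is rs k) :
    ∃ (q : ℕ) (hq : q < is.length), is[q] = k ∧ rs[q]'(hlen ▸ hq) = sparseExp is rs k := by
  have hmem : k ∈ is := by
    by_contra hk'
    rw [sparseExp_eq_zero_of_notMem hk'] at hk
    exact hk.false
  obtain ⟨q, hq, rfl⟩ := List.getElem_of_mem hmem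
  exact ⟨q, hq, rfl, (sparseExp_getElem hnd hlen hq).symm⟩

def denseExps (is rs : List ℕ) : List ℕ := (List.range (is.sum + 1)).map (sparseExp is rs)

lemma getD_denseExps (is rs : List ℕ) (k : ℕ) :
    (denseExps is rs).getD k 0 = sparseExp is rs k := by
  rw [denseExps, List.getD_eq_getElem?_getD, List.getElem?_map]
  by_cases hk : k < is.sum + 1
  · simp [hk]
  · have hnotMem : k ∉ is := fun hk' => hk (Nat.lt_succ_of_le (List.le_sum_of_mem hk'))
    simp [hk, sparseExp_eq_zero_of_notMem hnotMem]

lemma prodX_eq_denseProd_range' {is rs : List ℕ} (hs : is.Pairwise (· < ·))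
    (hlen : is.length = rs.length) {a n : ℕ} (hb : ∀ i ∈ is, a ≤ i ∧ i < a + n) :
    prodX is rs = denseProd ((List.range' a n).map (sparseExp is rs)) a := by
  induction n generalizing a is rs with
  | zero =>
    obtain rfl : is = [] := List.eq_nil_iff_forall_not_mem.mpr fun i hi => by
      have := hb i hi; omega
    obtain rfl : rs = [] := List.eq_nil_of_length_eq_zero hlen.symm
    rfl
  | succ n ih =>
    rw [List.range'_succ, List.map_cons, denseProd_cons]
    cases is with
    | nil =>
      obtain rfl := List.eq_nil_of_length_eq_zero hlen.symm
      simpa using ih List.Pairwise.nil rfl (a := a + 1) (by simp)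
    | cons i is =>
      obtain ⟨r, rs, rfl⟩ := List.exists_cons_of_length_eq_add_one hlen.symm
      have hgt : ∀ j ∈ is, i < j := (List.pairwise_cons.mp hs).1
      have hai : a ≤ i := (hb i (by simp)).1
      rcases hai.eq_or_lt with rfl | hai
      · have hmap : (List.range' (a + 1) n).map (sparseExp (a :: is) (r :: rs)) =
            (List.range' (a + 1) n).map (sparseExp is rs) :=
          List.map_congr_left fun k hk => by
            rw [List.mem_range'_1] at hk
            simp [show k ≠ a by omega]
        rw [sparseExp_cons, if_pos rfl, hmap, ← ih (List.pairwise_cons.mp hs).2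
          (by simpa using hlen) (fun j hj => ⟨hgt j hj, by have := hb j (by simp [hj]); omega⟩)]
        simp [prodX]
      · have ha : a ∉ i :: is := by
          simp only [List.mem_cons, not_or]
          exact ⟨hai.ne, fun h => (hgt a h).not_gt hai⟩
        rw [sparseExp_eq_zero_of_notMem ha, pow_zero, one_mul]
        refine ih hs hlen fun j hj => ⟨?_, by have := hb j hj; omega⟩
        rcases List.mem_cons.mp hj with rfl | hj
        · exact hai
        · exact hai.trans (hgt j hj)

lemma prodX_eq_denseProd_denseExps {is rs : List ℕ} (hs : is.Pairwise (· < ·))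
    (hlen : is.length = rs.length) : prodX is rs = denseProd (denseExps is rs) 0 := by
  rw [prodX_eq_denseProd_range' hs hlen (a := 0) (n := is.sum + 1)
    (fun i hi => ⟨i.zero_le, by have := List.le_sum_of_mem hi; omega⟩), ← List.range_eq_range']
  rfl

lemma prodX_eq_denseProd {is rs es : List ℕ} (hs : is.Pairwise (· < ·))
    (hlen : is.length = rs.length) (h : ∀ k, es.getD k 0 = sparseExp is rs k) :
    prodX is rs = denseProd es 0 := by
  rw [prodX_eq_denseProd_denseExps hs hlen]
  exact denseProd_congr (fun k => by rw [h k, getD_denseExps]) 0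

namespace BinTree

lemma numLeaves_eq_numCarets_add_one (T : BinTree) : T.numLeaves = T.numCarets + 1 := by
  induction T with
  | leaf => rfl
  | node l r ihl ihr => simp only [numLeaves, numCarets, ihl, ihr]; omega

lemma expsAux_node_of_eq_cons {l : BinTree} {h : ℕ} {t : List ℕ} (hl : l.expsAux = h :: t)
    (r : BinTree) : (node l r).expsAux = (h + 1) :: (t ++ r.expsAux) := by
  simp [expsAux, hl]

lemma exists_expsAux_eq_cons (T : BinTree) : ∃ h t, T.expsAux = h :: t := by
  induction T with
  | leaf => exact ⟨0, [], rfl⟩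
  | node l r ihl _ =>
    obtain ⟨h, t, hl⟩ := ihl
    exact ⟨h + 1, t ++ r.expsAux, expsAux_node_of_eq_cons hl r⟩

lemma length_expsAux (T : BinTree) : T.expsAux.length = T.numLeaves := by
  induction T with
  | leaf => rfl
  | node l r ihl ihr =>
    obtain ⟨h, t, hl⟩ := exists_expsAux_eq_cons l
    rw [hl] at ihl
    simp [expsAux_node_of_eq_cons hl, numLeaves, ← ihl, ← ihr]
    omega

lemma sum_expsAux (T : BinTree) : T.expsAux.sum = T.numCarets := by
  induction T with
  | leaf => rfl
  | node l r ihl ihr =>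
    obtain ⟨h, t, hl⟩ := exists_expsAux_eq_cons l
    rw [hl] at ihl
    simp [expsAux_node_of_eq_cons hl, numCarets, ← ihl, ← ihr]
    omega

lemma getD_expsAux_zero_pos {l r : BinTree} : 0 < (node l r).expsAux.getD 0 0 := by
  obtain ⟨h, t, hl⟩ := exists_expsAux_eq_cons l
  simp [expsAux_node_of_eq_cons hl r]

lemma eq_leaf_of_getD_expsAux_zero_eq_zero {T : BinTree} (hT : T.expsAux.getD 0 0 = 0) :
    T = leaf := by
  cases T with
  | leaf => rfl
  | node l r => exact absurd hT getD_expsAux_zero_pos.ne'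

lemma lt_numLeaves_of_getD_expsAux_pos {T : BinTree} {k : ℕ} (hk : 0 < T.expsAux.getD k 0) :
    k + 1 < T.numLeaves := by
  induction T generalizing k with
  | leaf => simp [expsAux] at hk
  | node l r ihl ihr =>
    obtain ⟨h, t, hl⟩ := exists_expsAux_eq_cons l
    have hlen := length_expsAux l
    rw [hl, List.length_cons] at hlen
    have hr := r.numLeaves_eq_numCarets_add_one
    rw [expsAux_node_of_eq_cons hl] at hk
    simp only [numLeaves]
    rcases k with _ | k
    · have := l.numLeaves_eq_numCarets_add_one
      omega
    rw [List.getD_cons_succ] at hk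
    by_cases hkt : k < t.length
    · rw [List.getD_append _ _ _ _ hkt] at hk
      have := @ihl (k + 1) (by rwa [hl, List.getD_cons_succ])
      omega
    · rw [List.getD_append_right _ _ _ _ (by omega)] at hk
      have := ihr hk
      omega

lemma exposedCaretPairs_node {l r : BinTree} (h : l ≠ leaf ∨ r ≠ leaf) :
    (node l r).exposedCaretPairs =
      l.exposedCaretPairs ++ r.exposedCaretPairs.map (· + l.numLeaves) := by
  cases l <;> cases r <;> simp_all [exposedCaretPairs]

lemma eq_leaf_of_numLeaves_eq_one {T : BinTree} (hT : T.numLeaves = 1) : T = leaf := by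
  cases T with
  | leaf => rfl
  | node l r =>
    have := l.numLeaves_eq_numCarets_add_one
    have := r.numLeaves_eq_numCarets_add_one
    simp only [numLeaves] at hT
    omega

lemma ne_leaf_of_getD_expsAux_pos {T : BinTree} {k : ℕ} (hk : 0 < T.expsAux.getD k 0) :
    T ≠ leaf := by
  rintro rfl
  simp [expsAux] at hk

lemma mem_exposedCaretPairs_node_left {l r : BinTree} (hl : l ≠ leaf) {k : ℕ}
    (hk : k ∈ l.exposedCaretPairs) : k ∈ (node l r).exposedCaretPairs := by
  rw [exposedCaretPairs_node (.inl hl)]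
  exact List.mem_append_left _ hk

lemma mem_exposedCaretPairs_node_right {l r : BinTree} (hr : r ≠ leaf) {k : ℕ}
    (hk : k ∈ r.exposedCaretPairs) : k + l.numLeaves ∈ (node l r).exposedCaretPairs := by
  rw [exposedCaretPairs_node (.inr hr)]
  exact List.mem_append_right _ (List.mem_map_of_mem hk)

lemma mem_exposedCaretPairs_of_expsAux {T : BinTree} {k : ℕ} (hk : 0 < T.expsAux.getD k 0)
    (hk1 : T.expsAux.getD (k + 1) 0 = 0) : k ∈ T.exposedCaretPairs := by
  induction T generalizing k with
  | leaf => simp [expsAux] at hk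
  | node l r ihl ihr =>
    obtain ⟨h, t, hl⟩ := exists_expsAux_eq_cons l
    have hlen : t.length + 1 = l.numLeaves := by rw [← length_expsAux, hl, List.length_cons]
    rw [expsAux_node_of_eq_cons hl, List.getD_cons_succ] at hk1
    rw [expsAux_node_of_eq_cons hl] at hk
    rcases k with _ | k
    · cases t with
      | nil =>
        obtain rfl := eq_leaf_of_numLeaves_eq_one hlen.symm
        obtain rfl := eq_leaf_of_getD_expsAux_zero_eq_zero (by simpa using hk1)
        simp [exposedCaretPairs]
      | cons h' t =>
        obtain ⟨a, b, rfl⟩ : ∃ a b, l = node a b := by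
          cases l with
          | leaf => simp [numLeaves] at hlen
          | node a b => exact ⟨a, b, rfl⟩
        refine mem_exposedCaretPairs_node_left (by simp) (ihl getD_expsAux_zero_pos ?_)
        simpa [hl] using hk1
    rw [List.getD_cons_succ] at hk
    by_cases hkt : k < t.length
    · have hpos : 0 < l.expsAux.getD (k + 1) 0 := by
        rwa [hl, List.getD_cons_succ, ← List.getD_append _ _ _ _ hkt]
      have := lt_numLeaves_of_getD_expsAux_pos hpos
      refine mem_exposedCaretPairs_node_left (ne_leaf_of_getD_expsAux_pos hpos) (ihl hpos ?_)
      rwa [hl, List.getD_cons_succ, ← List.getD_append _ _ _ _ (by omega)]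
    · rw [List.getD_append_right _ _ _ _ (by omega)] at hk hk1
      have hr := ne_leaf_of_getD_expsAux_pos hk
      have := mem_exposedCaretPairs_node_right (l := l) hr
        (ihr hk (by rwa [Nat.sub_add_comm (by omega)] at hk1))
      rwa [← hlen, ← add_assoc, Nat.sub_add_cancel (by omega)] at this

lemma mem_exposedCaretPairs_of_exps {T : BinTree} {k : ℕ} (hk : 0 < T.exps.getD k 0)
    (hk1 : T.exps.getD (k + 1) 0 = 0) : k ∈ T.exposedCaretPairs := by
  induction T generalizing k with
  | leaf => simp [exps] at hk
  | node l r _ ihr =>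
    simp only [exps] at hk hk1
    have hlen := length_expsAux l
    by_cases hkl : k + 1 < l.numLeaves
    · rw [List.getD_append _ _ _ _ (by omega)] at hk hk1
      exact mem_exposedCaretPairs_node_left (ne_leaf_of_getD_expsAux_pos hk)
        (mem_exposedCaretPairs_of_expsAux hk hk1)
    have hkl' : l.numLeaves ≤ k := by
      by_contra! hlt
      rw [List.getD_append _ _ _ _ (by omega)] at hk
      have := lt_numLeaves_of_getD_expsAux_pos hk
      omega
    rw [List.getD_append_right _ _ _ _ (by omega)] at hk hk1
    have hr : r ≠ leaf := by rintro rfl; simp [exps] at hk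
    have := mem_exposedCaretPairs_node_right (l := l) hr
      (ihr hk (by rwa [Nat.sub_add_comm (by omega)] at hk1))
    rwa [hlen, Nat.sub_add_cancel hkl'] at this

lemma exps_eq_of_rightSubtree_leftSubtree_ne_leaf {T : BinTree}
    (hT : T.rightSubtree.leftSubtree ≠ .leaf) :
    ∃ e rest, T.exps = T.leftSubtree.expsAux ++ (e + 1) :: rest := by
  obtain ⟨L, a, b, RR, rfl⟩ : ∃ L a b RR, T = .node L (.node (.node a b) RR) := by
    rcases T with _ | ⟨L, _ | ⟨_ | ⟨a, b⟩, RR⟩⟩ <;> simp_all [rightSubtree, leftSubtree]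
  obtain ⟨e, t, ha⟩ := exists_expsAux_eq_cons a
  exact ⟨e, t ++ b.expsAux ++ RR.exps, by simp [exps, leftSubtree, expsAux_node_of_eq_cons ha]⟩

end BinTree

theorem isNFExps_exps_of_isReducedPair {Tm Tp : BinTree} (hred : IsReducedPair Tm Tp) :
    IsNFExps Tp.exps Tm.exps := by
  intro k hp hm
  by_contra! h0
  exact hred.2 k ⟨mem_exposedCaretPairs_of_exps hm (by omega),
    mem_exposedCaretPairs_of_exps hp (by omega)⟩

theorem isNFExps_denseExps_of_isNF {is rs js ss : List ℕ} (hnf : IsNF is rs js ss) :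
    IsNFExps (denseExps is rs) (denseExps js ss) := by
  obtain ⟨hl1, hl2, -, -, hp1, hp2, hpair⟩ := hnf
  intro k
  simp only [getD_denseExps, sparseExp_pos_iff hl1 hp1, sparseExp_pos_iff hl2 hp2]
  exact hpair k

theorem sparseExp_eq_getD_exps {Tm Tp : BinTree} {is rs js ss : List ℕ}
    (hred : IsReducedPair Tm Tp) (hnf : IsNF is rs js ss)
    (h : toF Tm Tp = prodX is rs * (prodX js ss)⁻¹) (k : ℕ) :
    sparseExp is rs k = Tp.exps.getD k 0 ∧ sparseExp js ss k = Tm.exps.getD k 0 := by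
  have hsorted : ∀ {l : List ℕ}, l.IsChain (· < ·) → l.Pairwise (· < ·) :=
    List.isChain_iff_pairwise.mp
  have heq : denseFrac (denseExps is rs) (denseExps js ss) = denseFrac Tp.exps Tm.exps := by
    rw [denseFrac, ← prodX_eq_denseProd_denseExps (hsorted hnf.2.2.1) hnf.1,
      ← prodX_eq_denseProd_denseExps (hsorted hnf.2.2.2.1) hnf.2.1, ← h]
    rfl
  simpa only [getD_denseExps] using getD_eq_of_action_denseFrac_eq (isNFExps_denseExps_of_isNF hnf)
    (isNFExps_exps_of_isReducedPair hred) (congrArg action heq) k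

-- `x_m⁻¹` moves right past `x_a^e` as `x_{m+e}⁻¹` when `a < m` (`x_inv_mul_pow`).
def CanPass : ℕ → ℕ → List ℕ → Prop
  | _, _, [] => True
  | m, a, e :: es => (e = 0 ∨ a < m) ∧ CanPass (m + e) (a + 1) es

lemma CanPass.mono {m m' a : ℕ} {es : List ℕ} (h : CanPass m a es) (hm : m ≤ m') :
    CanPass m' a es := by
  induction es generalizing m m' a with
  | nil => trivial
  | cons e es ih => exact ⟨h.1.imp_right (·.trans_le hm), ih h.2 (by omega)⟩

lemma canPass_append {m a : ℕ} {l₁ l₂ : List ℕ} :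
    CanPass m a (l₁ ++ l₂) ↔ CanPass m a l₁ ∧ CanPass (m + l₁.sum) (a + l₁.length) l₂ := by
  induction l₁ generalizing m a with
  | nil => simp [CanPass]
  | cons e l₁ ih =>
    simp only [List.cons_append, CanPass, ih, List.sum_cons, List.length_cons, and_assoc]
    rw [← add_assoc, ← add_assoc, add_right_comm a]

lemma canPass_expsAux (T : BinTree) {m a : ℕ} (h : a < m) : CanPass m a T.expsAux := by
  induction T generalizing m a with
  | leaf => exact ⟨.inl rfl, trivial⟩
  | node l r ihl ihr =>
    obtain ⟨e, t, hl⟩ := exists_expsAux_eq_cons l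
    have hsum := sum_expsAux l
    have hlen := length_expsAux l
    have := l.numLeaves_eq_numCarets_add_one
    rw [hl, List.sum_cons] at hsum
    rw [hl, List.length_cons] at hlen
    have htail : CanPass (m + e) (a + 1) t := by
      have := ihl h
      rw [hl] at this
      exact this.2
    rw [expsAux_node_of_eq_cons hl]
    refine ⟨.inr h, canPass_append.mpr ⟨htail.mono (by omega), ihr (by omega)⟩⟩

lemma x_inv_mul_denseProd {m a : ℕ} {es₁ : List ℕ} (hpass : CanPass m a es₁)
    (hm : a + es₁.length = m + es₁.sum) (e : ℕ) (es₂ : List ℕ) :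
    (x m)⁻¹ * denseProd (es₁ ++ (e + 1) :: es₂) a = denseProd (es₁ ++ e :: es₂) a := by
  induction es₁ generalizing m a with
  | nil =>
    obtain rfl : a = m := by simpa using hm
    rw [List.nil_append, List.nil_append, denseProd_cons, denseProd_cons, pow_succ', ← mul_assoc,
      ← mul_assoc, inv_mul_cancel, one_mul]
  | cons f es₁ ih =>
    obtain ⟨hf, hpass⟩ := hpass
    have hflip : (x m)⁻¹ * x a ^ f = x a ^ f * (x (m + f))⁻¹ := by
      rcases hf with rfl | ha
      · simp
      · exact x_inv_mul_pow ha f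
    simp only [List.cons_append, denseProd_cons]
    rw [← mul_assoc, hflip, mul_assoc, ih hpass (by simp at hm; omega)]

lemma _root_.List.getD_append_cons_eq_update {α : Type*} (l₁ l₂ : List α) (a b d : α) (k : ℕ) :
    (l₁ ++ b :: l₂).getD k d =
      Function.update (fun k => (l₁ ++ a :: l₂).getD k d) l₁.length b k := by
  rcases lt_trichotomy k l₁.length with h | rfl | h
  · rw [Function.update_of_ne h.ne, List.getD_append _ _ _ _ h, List.getD_append _ _ _ _ h]
  · rw [Function.update_self, List.getD_append_right _ _ _ _ le_rfl, Nat.sub_self,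
      List.getD_cons_zero]
  · obtain ⟨j, rfl⟩ := Nat.exists_eq_add_of_lt h
    rw [Function.update_of_ne h.ne', List.getD_append_right _ _ _ _ h.le,
      List.getD_append_right _ _ _ _ h.le, add_assoc, Nat.add_sub_cancel_left]
    rfl

lemma x1_inv_mul_prodX {js ss rest : List ℕ} {T : BinTree} {e q : ℕ}
    (hsorted : js.Pairwise (· < ·)) (hlen : js.length = ss.length) (hq : q < js.length)
    (hjq : js[q] = T.numLeaves)
    (hss : sparseExp js ss = fun k => (T.expsAux ++ (e + 1) :: rest).getD k 0) :
    x1⁻¹ * prodX js ss = prodX js (ss.set q e) := by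
  have hold : prodX js ss = denseProd (T.expsAux ++ (e + 1) :: rest) 0 :=
    prodX_eq_denseProd hsorted hlen fun k => by rw [hss]
  have hnew : prodX js (ss.set q e) = denseProd (T.expsAux ++ e :: rest) 0 :=
    prodX_eq_denseProd hsorted (by simpa using hlen) fun k => by
      rw [sparseExp_set hsorted.nodup hlen hq, hjq, hss, ← length_expsAux,
        List.getD_append_cons_eq_update _ _ (e + 1)]
  rw [hold, hnew, ← x_one]
  exact x_inv_mul_denseProd (canPass_expsAux T one_pos)
    (by rw [length_expsAux, sum_expsAux, numLeaves_eq_numCarets_add_one]; omega) e rest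

/-- normal form of `w x₁`. If `w` has normal form
`x_{i₁}^{r₁} ⋯ x_{i_n}^{r_n} x_{j_m}^{-s_m} ⋯ x_{j₁}^{-s₁}` and the left
subtree of the right child of the root of `T₋` is nonempty, then `w x₁` has
normal form obtained by decreasing by one the exponent `s_l` at the index
`j_l`, the smallest leaf number in the right subtree of the root of `T₋`. -/
theorem normal_form_mul_x1 (w : F) (Tm Tp : BinTree) (is rs js ss : List ℕ)
    (hred : IsReducedPair Tm Tp) (hrepr : toF Tm Tp = w)
    (hnf : IsNF is rs js ss)
    (hw : w = prodX is rs * (prodX js ss)⁻¹)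
    (hSRL : Tm.rightSubtree.leftSubtree ≠ BinTree.leaf) :
    ∃ q sq : ℕ, js[q]? = some Tm.minRightLeaf ∧ ss[q]? = some sq ∧
      w * x1 = prodX is rs * (prodX js (ss.set q (sq - 1)))⁻¹ := by
  have hsorted : js.Pairwise (· < ·) := List.isChain_iff_pairwise.mp hnf.2.2.2.1
  obtain ⟨e, rest, hexps⟩ := exps_eq_of_rightSubtree_leftSubtree_ne_leaf hSRL
  have hss : sparseExp js ss = fun k => (Tm.leftSubtree.expsAux ++ (e + 1) :: rest).getD k 0 :=
    funext fun k => by rw [← hexps, (sparseExp_eq_getD_exps hred hnf (hrepr.trans hw) k).2]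
  have hmin : sparseExp js ss Tm.minRightLeaf = e + 1 := by
    simp [hss, minRightLeaf, ← length_expsAux]
  obtain ⟨q, hq, hjq, hsq⟩ :=
    exists_getElem_eq_of_sparseExp_pos hsorted.nodup hnf.2.1 (by rw [hmin]; exact e.succ_pos)
  refine ⟨q, e + 1, by rw [List.getElem?_eq_getElem hq, hjq],
    by rw [List.getElem?_eq_getElem (hnf.2.1 ▸ hq), hsq, hmin], ?_⟩
  rw [hw, Nat.add_sub_cancel, ← x1_inv_mul_prodX hsorted hnf.2.1 hq hjq hss]
  group

end Thompson
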